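/- Properties of the HLL flux (Theorem 2.10): Let d ∈ {1,2,3}, let U⁻, U⁺ ∈ 𝒢 with magnetic fields B⁻, B⁺, and let ξ ∈ ℝ^d be a unit vector. Assume the wave speeds satisfy σ_r ≥ α_r(U⁺, U⁻; ξ) and σ_l ≤ α_l(U⁻, U⁺; ξ), and set σ⁺ = max{σ_r, 0}, σ⁻ = min{σ_l, 0}. Then σ⁺ − σ⁻ > 0, and: (i) F̂(U⁻, U⁺; ξ) = σ⁻·H(U⁻, U⁺; ξ) + ⟨ξ, F(U⁻)⟩ − σ⁻U⁻ and F̂(U⁻, U⁺; ξ) = σ⁺·H(U⁻, U⁺; ξ) + ⟨ξ, F(U⁺)⟩ − σ⁺U⁺; (ii) the intermediate state H = H(U⁻, U⁺; ξ) has positive density component; (iii) for all v*, B* ∈ ℝ³, H·n* + |B*|²/2 + (v*·B*)(σ⁺ − σ⁻)⁻¹(⟨ξ, B⁺⟩ − ⟨ξ, B⁻⟩) ≥ 0; (iv) if ⟨ξ, B⁺⟩ = ⟨ξ, B⁻⟩ then H ∈ cl(𝒢*). -/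

import Mathlib

noncomputable section

open Finset

/-- An MHD state `U = (ρ, m, B, E)` viewed as a vector in `ℝ⁸`. -/
abbrev MHDState := Fin 8 → ℝ

namespace MHD

/-- Build a state from density, momentum, magnetic field, total energy. -/
def mk (ρ : ℝ) (m B : Fin 3 → ℝ) (E : ℝ) : MHDState :=
  ![ρ, m 0, m 1, m 2, B 0, B 1, B 2, E]

/-- Density component. -/
def dens (U : MHDState) : ℝ := U 0

/-- Momentum components. -/
def mom (U : MHDState) : Fin 3 → ℝ := ![U 1, U 2, U 3]

/-- Magnetic field components. -/
def magB (U : MHDState) : Fin 3 → ℝ := ![U 4, U 5, U 6]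

/-- Total energy component. -/
def toten (U : MHDState) : ℝ := U 7

/-- Euclidean dot product on `ℝ³`. -/
def dot3 (a b : Fin 3 → ℝ) : ℝ := ∑ k, a k * b k

/-- Squared Euclidean norm on `ℝ³`. -/
def sq3 (a : Fin 3 → ℝ) : ℝ := dot3 a a

/-- Euclidean norm on `ℝ³`. -/
def norm3 (a : Fin 3 → ℝ) : ℝ := Real.sqrt (sq3 a)

/-- Velocity `v = m / ρ`. -/
def vel (U : MHDState) : Fin 3 → ℝ := fun k => mom U k / dens U

/-- Internal energy `𝓔(U) = E − (|m|²/ρ + |B|²)/2`. -/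
def intE (U : MHDState) : ℝ := toten U - (sq3 (mom U) / dens U + sq3 (magB U)) / 2

/-- Specific internal energy `e = 𝓔(U)/ρ`. -/
def specE (U : MHDState) : ℝ := intE U / dens U

/-- The admissible state set `𝒢`. -/
def Gset : Set MHDState := {U | 0 < dens U ∧ 0 < intE U}

/-- The set `𝒢_ρ` of states with positive density. -/
def Grho : Set MHDState := {U | 0 < dens U}

/-- Euclidean dot product on `ℝ⁸`. -/
def dot8 (U V : MHDState) : ℝ := ∑ i, U i * V i

/-- The vector `n* = (|v*|²/2, −v*, −B*, 1)`. -/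
def nstar (vs Bs : Fin 3 → ℝ) : MHDState :=
  mk (sq3 vs / 2) (fun k => -vs k) (fun k => -Bs k) 1

/-- The set `𝒢*`. -/
def GstarSet : Set MHDState :=
  {U | 0 < dens U ∧ ∀ vs Bs : Fin 3 → ℝ, 0 < dot8 U (nstar vs Bs) + sq3 Bs / 2}

/-- Equation of state assumption: for `ρ > 0`, `e > 0 ↔ p(ρ,e) > 0`. -/
def IsEOS (pfun : ℝ → ℝ → ℝ) : Prop :=
  ∀ ρ e : ℝ, 0 < ρ → (0 < e ↔ 0 < pfun ρ e)

/-- Pressure of a state, via the equation of state. -/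
def pres (pfun : ℝ → ℝ → ℝ) (U : MHDState) : ℝ := pfun (dens U) (specE U)

/-- Total pressure `p + |B|²/2`. -/
def ptot (pfun : ℝ → ℝ → ℝ) (U : MHDState) : ℝ := pres pfun U + sq3 (magB U) / 2

/-- The `i`-th flux `F_i(U)`. -/
def flux (pfun : ℝ → ℝ → ℝ) (i : Fin 3) (U : MHDState) : MHDState :=
  mk (dens U * vel U i)
    (fun k => dens U * vel U i * vel U k - magB U i * magB U k
      + ptot pfun U * (if k = i then 1 else 0))
    (fun k => vel U i * magB U k - magB U i * vel U k)
    (vel U i * (toten U + ptot pfun U) - magB U i * dot3 (vel U) (magB U))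

/-- Directional inner product `⟨ξ, w⟩ = Σ_{k<d} ξ_k w_k` for `ξ ∈ ℝ^d`, `w ∈ ℝ³`, `d ≤ 3`. -/
def dirDot {d : ℕ} (hd : d ≤ 3) (ξ : Fin d → ℝ) (w : Fin 3 → ℝ) : ℝ :=
  ∑ k, ξ k * w (Fin.castLE hd k)

/-- Directional flux `⟨ξ, F(U)⟩ = Σ_{i<d} ξ_i F_i(U)`. -/
def dirFlux (pfun : ℝ → ℝ → ℝ) {d : ℕ} (hd : d ≤ 3) (ξ : Fin d → ℝ) (U : MHDState) :
    MHDState :=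
  ∑ i, ξ i • flux pfun (Fin.castLE hd i) U

/-- `ξ` is a unit vector. -/
def unitVec {d : ℕ} (ξ : Fin d → ℝ) : Prop := (∑ k, (ξ k) ^ 2) = 1

/-- `𝒞_s(U) = p / (ρ √(2e))`. -/
def soundC (pfun : ℝ → ℝ → ℝ) (U : MHDState) : ℝ :=
  pres pfun U / (dens U * Real.sqrt (2 * specE U))

/-- `𝒞(U; ξ)`. -/
def waveC (pfun : ℝ → ℝ → ℝ) {d : ℕ} (hd : d ≤ 3) (ξ : Fin d → ℝ) (U : MHDState) : ℝ :=
  Real.sqrt ((soundC pfun U ^ 2 + sq3 (magB U) / dens U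
    + Real.sqrt ((soundC pfun U ^ 2 + sq3 (magB U) / dens U) ^ 2
      - 4 * soundC pfun U ^ 2 * dirDot hd ξ (magB U) ^ 2 / dens U)) / 2)

/-- Roe-type averaged velocity `v̄ = (√ρ v + √ρ̃ ṽ)/(√ρ + √ρ̃)`. -/
def roeV (U Ut : MHDState) : Fin 3 → ℝ := fun k =>
  (Real.sqrt (dens U) * vel U k + Real.sqrt (dens Ut) * vel Ut k)
    / (Real.sqrt (dens U) + Real.sqrt (dens Ut))

/-- `α_r(U, Ũ; ξ)`. -/
def alphaR (pfun : ℝ → ℝ → ℝ) {d : ℕ} (hd : d ≤ 3) (ξ : Fin d → ℝ) (U Ut : MHDState) : ℝ :=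
  max (dirDot hd ξ (vel U)) (dirDot hd ξ (roeV U Ut)) + waveC pfun hd ξ U
    + norm3 (magB U - magB Ut) / (Real.sqrt (dens U) + Real.sqrt (dens Ut))

/-- `α_l(U, Ũ; ξ)`. -/
def alphaL (pfun : ℝ → ℝ → ℝ) {d : ℕ} (hd : d ≤ 3) (ξ : Fin d → ℝ) (U Ut : MHDState) : ℝ :=
  min (dirDot hd ξ (vel U)) (dirDot hd ξ (roeV U Ut)) - waveC pfun hd ξ U
    - norm3 (magB U - magB Ut) / (Real.sqrt (dens U) + Real.sqrt (dens Ut))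

/-- `α_⋆(U, Ũ; ξ)`. -/
def alphaS (pfun : ℝ → ℝ → ℝ) {d : ℕ} (hd : d ≤ 3) (ξ : Fin d → ℝ) (U Ut : MHDState) : ℝ :=
  max (|dirDot hd ξ (vel U)|) (|dirDot hd ξ (roeV U Ut)|) + waveC pfun hd ξ U
    + norm3 (magB U - magB Ut) / (Real.sqrt (dens U) + Real.sqrt (dens Ut))

/-- The vector `θ(U, v*, B*) = 2^{−1/2}(B − B*, √ρ(v − v*), √(2ρe)) ∈ ℝ⁷`. -/
def theta (U : MHDState) (vs Bs : Fin 3 → ℝ) : Fin 7 → ℝ :=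
  ![(magB U 0 - Bs 0) / Real.sqrt 2,
    (magB U 1 - Bs 1) / Real.sqrt 2,
    (magB U 2 - Bs 2) / Real.sqrt 2,
    Real.sqrt (dens U) * (vel U 0 - vs 0) / Real.sqrt 2,
    Real.sqrt (dens U) * (vel U 1 - vs 1) / Real.sqrt 2,
    Real.sqrt (dens U) * (vel U 2 - vs 2) / Real.sqrt 2,
    Real.sqrt (2 * intE U) / Real.sqrt 2]

/-- `|θ|²`. -/
def thetaSq (U : MHDState) (vs Bs : Fin 3 → ℝ) : ℝ := ∑ k, theta U vs Bs k ^ 2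

/-- Godunov–Powell source vector `S(U) = (0, B, v, v·B)`. -/
def source (U : MHDState) : MHDState := mk 0 (magB U) (vel U) (dot3 (vel U) (magB U))

/-- HLL numerical flux with clamped wave speeds `σm ≤ 0 ≤ σp`. -/
def hllFlux (pfun : ℝ → ℝ → ℝ) {d : ℕ} (hd : d ≤ 3) (ξ : Fin d → ℝ)
    (Um Up : MHDState) (σm σp : ℝ) : MHDState :=
  (σp - σm)⁻¹ • (σp • dirFlux pfun hd ξ Um - σm • dirFlux pfun hd ξ Up
    + (σm * σp) • (Up - Um))

/-- HLL intermediate state `H(U⁻, U⁺; ξ)`. -/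
def hllMid (pfun : ℝ → ℝ → ℝ) {d : ℕ} (hd : d ≤ 3) (ξ : Fin d → ℝ)
    (Um Up : MHDState) (σm σp : ℝ) : MHDState :=
  (σp - σm)⁻¹ • (σp • Up - dirFlux pfun hd ξ Up - σm • Um + dirFlux pfun hd ξ Um)

/-- The quantity `α̂_j` of Theorem 2.3. -/
def alphaHat (pfun : ℝ → ℝ → ℝ) {d : ℕ} (hd : d ≤ 3) {N : ℕ}
    (s : Fin N → ℝ) (ξ : Fin N → Fin d → ℝ) (U : Fin N → MHDState) (j : Fin N) : ℝ :=
  max (dirDot hd (ξ j) (vel (U j)))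
      ((∑ i, s i)⁻¹ * ∑ i, s i * dirDot hd (fun k => ξ j k - ξ i k) (roeV (U j) (U i)))
  + waveC pfun hd (ξ j) (U j)
  + 2 * (∑ i, s i)⁻¹ * ∑ i, s i *
      (norm3 (magB (U j) - magB (U i)) / (Real.sqrt (dens (U j)) + Real.sqrt (dens (U i))))

def d1le3 : (1 : ℕ) ≤ 3 := by omega
def d2le3 : (2 : ℕ) ≤ 3 := by omega

/-- In one dimension the direction `ξ = 1`. -/
def xi1 : Fin 1 → ℝ := fun _ => 1

/-!
Everything is tested against the affine functionals `U ↦ U · n* + |B*|²/2`, which on `𝒢` equal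
the relative energy `G(U) = ρ|v − v*|²/2 + |B − B*|²/2 + ρe ≥ 0`. Pairing `(σ⁺ − σ⁻) H` with `n*`
gives `(σ⁺ − ⟨ξ, v⁺⟩) G(U⁺) + (⟨ξ, v⁻⟩ − σ⁻) G(U⁻)` plus flux terms, up to the term
`(v*·B*)(⟨ξ, B⁺⟩ − ⟨ξ, B⁻⟩)` produced by the jump of the normal magnetic field.
The pressure–magnetic coupling term of each flux is at most `𝒞(U; ξ) G(U)`: after Cauchy–Schwarz
this reduces to a 2×2 quadratic form whose largest eigenvalue is `ρ 𝒞²`. The transport of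
magnetic energy `|B − B*|²/2` is compared across the two states through the Roe average `v̄`;
this is what the terms `⟨ξ, v̄⟩` and `|B⁺ − B⁻| / (√ρ⁺ + √ρ⁻)` in `α_r`, `α_l` pay for.
When `⟨ξ, B⁺⟩ = ⟨ξ, B⁻⟩`, raising the energy of `H` by `ε > 0` gives states of `𝒢*`.
-/

section Euclidean

lemma dot3_eq_inner (a b : Fin 3 → ℝ) :
    dot3 a b = inner ℝ (WithLp.toLp 2 a : EuclideanSpace ℝ (Fin 3)) (WithLp.toLp 2 b) := by
  simp [dot3, PiLp.inner_apply, mul_comm]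

lemma norm3_eq_norm (a : Fin 3 → ℝ) :
    norm3 a = ‖(WithLp.toLp 2 a : EuclideanSpace ℝ (Fin 3))‖ := by
  simp [norm3, sq3, dot3, EuclideanSpace.norm_eq, sq]

lemma sq3_nonneg (a : Fin 3 → ℝ) : 0 ≤ sq3 a := by
  simp only [sq3, dot3, Fin.sum_univ_three, ← sq]; positivity

lemma norm3_nonneg (a : Fin 3 → ℝ) : 0 ≤ norm3 a := Real.sqrt_nonneg _

lemma norm3_sq (a : Fin 3 → ℝ) : norm3 a ^ 2 = sq3 a := Real.sq_sqrt (sq3_nonneg a)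

lemma dot3_comm (a b : Fin 3 → ℝ) : dot3 a b = dot3 b a := by
  simp only [dot3, mul_comm]

lemma abs_dot3_le (a b : Fin 3 → ℝ) : |dot3 a b| ≤ norm3 a * norm3 b := by
  rw [dot3_eq_inner, norm3_eq_norm, norm3_eq_norm]
  exact abs_real_inner_le_norm _ _

lemma dot3_sq_le (a b : Fin 3 → ℝ) : dot3 a b ^ 2 ≤ sq3 a * sq3 b := by
  rw [← norm3_sq, ← norm3_sq, ← mul_pow, ← sq_abs]
  exact pow_le_pow_left₀ (abs_nonneg _) (abs_dot3_le a b) 2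

lemma norm3_add_le (a b : Fin 3 → ℝ) : norm3 (a + b) ≤ norm3 a + norm3 b := by
  simp only [norm3_eq_norm, WithLp.toLp_add]
  exact norm_add_le _ _

lemma norm3_smul (c : ℝ) (a : Fin 3 → ℝ) : norm3 (c • a) = |c| * norm3 a := by
  simp only [norm3_eq_norm, WithLp.toLp_smul, norm_smul, Real.norm_eq_abs]

lemma abs_sq3_sub_sq3_le (a b : Fin 3 → ℝ) :
    |sq3 a - sq3 b| ≤ (norm3 a + norm3 b) * norm3 (a - b) := by
  have h : sq3 a - sq3 b = dot3 (a + b) (a - b) := by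
    simp only [sq3, dot3, Fin.sum_univ_three, Pi.add_apply, Pi.sub_apply]; ring
  rw [h]
  exact (abs_dot3_le _ _).trans
    (mul_le_mul_of_nonneg_right (norm3_add_le a b) (norm3_nonneg _))

lemma dot3_sub_smul_sub_smul (a b c : Fin 3 → ℝ) (t s : ℝ) :
    dot3 (a - t • c) (b - s • c) = dot3 a b - s * dot3 a c - t * dot3 c b + t * s * sq3 c := by
  simp only [sq3, dot3, Fin.sum_univ_three, Pi.sub_apply, Pi.smul_apply, smul_eq_mul]; ring

lemma sq3_sub_smul (a c : Fin 3 → ℝ) (t : ℝ) :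
    sq3 (a - t • c) = sq3 a - 2 * t * dot3 a c + t ^ 2 * sq3 c := by
  simp only [sq3, dot3, Fin.sum_univ_three, Pi.sub_apply, Pi.smul_apply, smul_eq_mul]; ring

end Euclidean

section Algebra

lemma larger_root_bounds {a s c l : ℝ} (hc : 0 ≤ c) (hcs : c ≤ s)
    (hl : l = (a + s + Real.sqrt ((a + s) ^ 2 - 4 * a * c)) / 2) :
    a + (s - c) ≤ l ∧ c ≤ l ∧ (l - (a + (s - c))) * (l - c) = c * (s - c) := by
  have hdisc : (a + s) ^ 2 - 4 * a * c = (a + (s - c) - c) ^ 2 + 4 * c * (s - c) := by ring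
  have hnonneg : 0 ≤ (a + s) ^ 2 - 4 * a * c := by rw [hdisc]; nlinarith
  have hsq := Real.sq_sqrt hnonneg
  have hge : |a + (s - c) - c| ≤ Real.sqrt ((a + s) ^ 2 - 4 * a * c) :=
    abs_le_of_sq_le_sq (by nlinarith) (Real.sqrt_nonneg _)
  obtain ⟨h1, h2⟩ := abs_le.mp hge
  refine ⟨by linarith, by linarith, ?_⟩
  rw [hl]
  linear_combination (1 / 4 : ℝ) * hsq

-- `h₁`, `h₂`, `hl` say that `l` is the larger eigenvalue of `[[a + g, -β √g], [-β √g, β²]]`.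
lemma quadratic_form_le {a g β l S τ r : ℝ} (hr : 0 ≤ r) (h₁ : a + g ≤ l) (h₂ : β ^ 2 ≤ l)
    (hl : (l - (a + g)) * (l - β ^ 2) = β ^ 2 * g) (hτ : τ ^ 2 ≤ g * r) :
    (a + g) * S ^ 2 - 2 * β * S * τ + β ^ 2 * r ≤ l * (S ^ 2 + r) := by
  set X := (l - (a + g)) * S ^ 2
  set Y := (l - β ^ 2) * r
  have hX : 0 ≤ X := mul_nonneg (by linarith) (sq_nonneg S)
  have hY : 0 ≤ Y := mul_nonneg (by linarith) hr
  have hXY : (2 * (β * S * τ)) ^ 2 ≤ (X + Y) ^ 2 := by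
    have : (β * S * τ) ^ 2 ≤ X * Y := by
      have hXY : X * Y = β ^ 2 * g * (S ^ 2 * r) := by
        simp only [X, Y]; linear_combination (S ^ 2 * r) * hl
      rw [hXY]
      nlinarith [mul_le_mul_of_nonneg_left hτ (mul_nonneg (sq_nonneg β) (sq_nonneg S))]
    nlinarith [sq_nonneg (X - Y)]
  have := (abs_le_of_sq_le_sq' hXY (add_nonneg hX hY)).1
  simp only [X, Y] at this
  linarith

lemma sq3_cross_add_le {n B w : Fin 3 → ℝ} {a l : ℝ} (hn : sq3 n = 1)
    (h₁ : a + (sq3 B - dot3 n B ^ 2) ≤ l) (h₂ : dot3 n B ^ 2 ≤ l)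
    (hl : (l - (a + (sq3 B - dot3 n B ^ 2))) * (l - dot3 n B ^ 2)
      = dot3 n B ^ 2 * (sq3 B - dot3 n B ^ 2)) :
    sq3 (dot3 n w • B - dot3 n B • w) + a * dot3 n w ^ 2 ≤ l * sq3 w := by
  have hS : dot3 n w ^ 2 ≤ sq3 w := by simpa [hn] using dot3_sq_le n w
  -- Cauchy–Schwarz for the components of `w` and `B` orthogonal to `n`
  have hperp : (dot3 w B - dot3 n w * dot3 n B) ^ 2
      ≤ (sq3 B - dot3 n B ^ 2) * (sq3 w - dot3 n w ^ 2) := by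
    have h := dot3_sq_le (w - dot3 n w • n) (B - dot3 n B • n)
    rw [sq3_sub_smul, sq3_sub_smul, dot3_sub_smul_sub_smul, hn, dot3_comm w n, dot3_comm B n] at h
    linarith
  have hz : sq3 (dot3 n w • B - dot3 n B • w)
      = (sq3 B - dot3 n B ^ 2) * dot3 n w ^ 2
        - 2 * dot3 n B * dot3 n w * (dot3 w B - dot3 n w * dot3 n B)
        + dot3 n B ^ 2 * (sq3 w - dot3 n w ^ 2) := by
    simp only [sq3, dot3, Fin.sum_univ_three, Pi.sub_apply, Pi.smul_apply, smul_eq_mul]; ring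
  have := quadratic_form_le (S := dot3 n w) (by linarith) h₁ h₂ hl hperp
  rw [hz]; linarith

lemma sq_add_le_mul_add {x y P Q c e : ℝ} (hP : 0 ≤ P) (hQ : 0 ≤ Q) (hc : 0 ≤ c) (he : 0 ≤ e)
    (hx : x ^ 2 ≤ P * Q) (hy : y ^ 2 ≤ c * e) : (x + y) ^ 2 ≤ (P + c) * (Q + e) := by
  have h : (2 * (x * y)) ^ 2 ≤ (P * e + c * Q) ^ 2 := by
    nlinarith [mul_le_mul hx hy (sq_nonneg _) (by positivity), sq_nonneg (P * e - c * Q)]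
  nlinarith [(abs_le_of_sq_le_sq' h (by positivity)).2]

end Algebra

section Direction

def padDir {d : ℕ} (ξ : Fin d → ℝ) : Fin 3 → ℝ :=
  fun k => if h : (k : ℕ) < d then ξ ⟨k, h⟩ else 0

lemma dirDot_eq_dot3_padDir {d : ℕ} (hd : d ≤ 3) (ξ : Fin d → ℝ) (w : Fin 3 → ℝ) :
    dirDot hd ξ w = dot3 (padDir ξ) w := by
  interval_cases d <;> simp [dirDot, dot3, padDir, Fin.sum_univ_succ]

lemma sq3_padDir {d : ℕ} (hd : d ≤ 3) {ξ : Fin d → ℝ} (hξ : unitVec ξ) :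
    sq3 (padDir ξ) = 1 := by
  rw [← hξ]
  interval_cases d <;> simp [sq3, dot3, padDir, Fin.sum_univ_succ, sq]

lemma dirFlux_eq_sum_padDir (pfun : ℝ → ℝ → ℝ) {d : ℕ} (hd : d ≤ 3) (ξ : Fin d → ℝ)
    (U : MHDState) : dirFlux pfun hd ξ U = ∑ i, padDir ξ i • flux pfun i U := by
  interval_cases d <;> simp [dirFlux, padDir, Fin.sum_univ_succ]

lemma abs_dirDot_le {d : ℕ} (hd : d ≤ 3) {ξ : Fin d → ℝ} (hξ : unitVec ξ) (w : Fin 3 → ℝ) :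
    |dirDot hd ξ w| ≤ norm3 w := by
  simpa [dirDot_eq_dot3_padDir, norm3, sq3_padDir hd hξ] using abs_dot3_le (padDir ξ) w

lemma dirDot_sq_le {d : ℕ} (hd : d ≤ 3) {ξ : Fin d → ℝ} (hξ : unitVec ξ) (w : Fin 3 → ℝ) :
    dirDot hd ξ w ^ 2 ≤ sq3 w := by
  rw [← norm3_sq, ← sq_abs]
  exact pow_le_pow_left₀ (abs_nonneg _) (abs_dirDot_le hd hξ w) 2

lemma dirDot_sub {d : ℕ} (hd : d ≤ 3) (ξ : Fin d → ℝ) (a b : Fin 3 → ℝ) :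
    dirDot hd ξ (a - b) = dirDot hd ξ a - dirDot hd ξ b := by
  simp only [dirDot, Pi.sub_apply, mul_sub, Finset.sum_sub_distrib]

end Direction

section State

/-- The relative energy `U · n* + |B*|²/2` of `U` with respect to `(v*, B*)`. -/
def relEnergy (U : MHDState) (vs Bs : Fin 3 → ℝ) : ℝ :=
  dens U * sq3 (vel U - vs) / 2 + sq3 (magB U - Bs) / 2 + intE U

lemma dot8_nstar_add_eq_relEnergy (U : MHDState) (hρ : dens U ≠ 0) (vs Bs : Fin 3 → ℝ) :
    dot8 U (nstar vs Bs) + sq3 Bs / 2 = relEnergy U vs Bs := by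
  have h0 : U 0 ≠ 0 := hρ
  simp only [relEnergy, dot8, Fin.sum_univ_eight, nstar, mk, intE, vel, toten, mom, magB, dens,
    sq3, dot3, Fin.sum_univ_three, Pi.sub_apply, Matrix.cons_val_zero, Matrix.cons_val_one,
    Matrix.cons_val]
  field_simp
  ring

lemma relEnergy_ge {U : MHDState} (hU : U ∈ Gset) (vs Bs : Fin 3 → ℝ) :
    dens U * sq3 (vel U - vs) / 2 + sq3 (magB U - Bs) / 2 ≤ relEnergy U vs Bs := by
  simpa [relEnergy] using hU.2.le

lemma sq3_magB_sub_le_relEnergy {U : MHDState} (hU : U ∈ Gset) (vs Bs : Fin 3 → ℝ) :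
    sq3 (magB U - Bs) / 2 ≤ relEnergy U vs Bs := by
  linarith [relEnergy_ge hU vs Bs, mul_nonneg hU.1.le (sq3_nonneg (vel U - vs))]

lemma relEnergy_nonneg {U : MHDState} (hU : U ∈ Gset) (vs Bs : Fin 3 → ℝ) :
    0 ≤ relEnergy U vs Bs := by
  linarith [sq3_magB_sub_le_relEnergy hU vs Bs, sq3_nonneg (magB U - Bs)]

/-- The part of `⟨ξ, F(U)⟩ · n*` that is controlled by the wave speed `𝒞(U; ξ)`. -/
def fluxCoupling (pfun : ℝ → ℝ → ℝ) {d : ℕ} (hd : d ≤ 3) (ξ : Fin d → ℝ) (U : MHDState)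
    (vs Bs : Fin 3 → ℝ) : ℝ :=
  (pres pfun U + dot3 (magB U - Bs) (magB U)) * dirDot hd ξ (vel U - vs)
    - dirDot hd ξ (magB U) * dot3 (vel U - vs) (magB U - Bs)

lemma dot8_dirFlux_nstar (pfun : ℝ → ℝ → ℝ) {d : ℕ} (hd : d ≤ 3) (ξ : Fin d → ℝ)
    (U : MHDState) (hρ : dens U ≠ 0) (vs Bs : Fin 3 → ℝ) :
    dot8 (dirFlux pfun hd ξ U) (nstar vs Bs)
      = dirDot hd ξ (vel U) * relEnergy U vs Bs + fluxCoupling pfun hd ξ U vs Bs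
        - sq3 (magB U - Bs) / 2 * dirDot hd ξ (vel U - vs)
        + dot3 vs Bs * dirDot hd ξ (magB U) - sq3 Bs / 2 * dirDot hd ξ vs := by
  have h0 : U 0 ≠ 0 := hρ
  simp only [dirFlux_eq_sum_padDir, fluxCoupling, relEnergy, dirDot_eq_dot3_padDir]
  generalize padDir ξ = n
  simp only [dot8, Fin.sum_univ_eight, Finset.sum_apply, Pi.smul_apply, smul_eq_mul,
    nstar, flux, ptot, mk, intE, vel, toten, mom, magB, dens,
    sq3, dot3, Fin.sum_univ_three, Pi.sub_apply, Matrix.cons_val_zero, Matrix.cons_val_one,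
    Matrix.cons_val, Fin.isValue, Fin.reduceEq, reduceIte, mul_one, mul_zero, add_zero]
  field_simp
  ring

end State

section WaveSpeed

variable (pfun : ℝ → ℝ → ℝ) {d : ℕ} (hd : d ≤ 3) {ξ : Fin d → ℝ}

lemma dens_mul_waveC_sq {U : MHDState} (hρ : 0 < dens U) :
    dens U * waveC pfun hd ξ U ^ 2
      = (dens U * soundC pfun U ^ 2 + sq3 (magB U)
        + Real.sqrt ((dens U * soundC pfun U ^ 2 + sq3 (magB U)) ^ 2
          - 4 * (dens U * soundC pfun U ^ 2) * dirDot hd ξ (magB U) ^ 2)) / 2 := by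
  have hT : 0 ≤ soundC pfun U ^ 2 + sq3 (magB U) / dens U := by
    have := div_nonneg (sq3_nonneg (magB U)) hρ.le
    positivity
  have hsqrt : dens U * Real.sqrt ((soundC pfun U ^ 2 + sq3 (magB U) / dens U) ^ 2
        - 4 * soundC pfun U ^ 2 * dirDot hd ξ (magB U) ^ 2 / dens U)
      = Real.sqrt ((dens U * soundC pfun U ^ 2 + sq3 (magB U)) ^ 2
          - 4 * (dens U * soundC pfun U ^ 2) * dirDot hd ξ (magB U) ^ 2) := by
    nth_rewrite 1 [← Real.sqrt_sq hρ.le]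
    rw [← Real.sqrt_mul (sq_nonneg _)]
    congr 1
    field_simp
  rw [waveC, Real.sq_sqrt (by positivity), ← hsqrt]
  field_simp

lemma sq_pres_eq {U : MHDState} (hU : U ∈ Gset) :
    pres pfun U ^ 2 = 2 * intE U * (dens U * soundC pfun U ^ 2) := by
  obtain ⟨hρ, hI⟩ := hU
  rw [soundC, div_pow, mul_pow, Real.sq_sqrt (by rw [specE]; positivity), specE]
  field_simp

lemma waveC_spec (hξ : unitVec ξ) {U : MHDState} (hρ : 0 < dens U) :
    dens U * soundC pfun U ^ 2 + (sq3 (magB U) - dirDot hd ξ (magB U) ^ 2)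
        ≤ dens U * waveC pfun hd ξ U ^ 2 ∧
      dirDot hd ξ (magB U) ^ 2 ≤ dens U * waveC pfun hd ξ U ^ 2 ∧
      (dens U * waveC pfun hd ξ U ^ 2
          - (dens U * soundC pfun U ^ 2 + (sq3 (magB U) - dirDot hd ξ (magB U) ^ 2)))
        * (dens U * waveC pfun hd ξ U ^ 2 - dirDot hd ξ (magB U) ^ 2)
        = dirDot hd ξ (magB U) ^ 2 * (sq3 (magB U) - dirDot hd ξ (magB U) ^ 2) :=
  larger_root_bounds (sq_nonneg _) (dirDot_sq_le hd hξ _) (dens_mul_waveC_sq pfun hd hρ)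

lemma waveC_pos (hEOS : IsEOS pfun) (hξ : unitVec ξ) {U : MHDState}
    (hU : U ∈ Gset) : 0 < waveC pfun hd ξ U := by
  obtain ⟨hρ, hI⟩ := hU
  have hp : 0 < pres pfun U := (hEOS _ _ hρ).1 (div_pos hI hρ)
  have ha : 0 < dens U * soundC pfun U ^ 2 := by
    have := sq_pres_eq pfun ⟨hρ, hI⟩
    nlinarith [pow_pos hp 2]
  obtain ⟨h₁, -, -⟩ := waveC_spec pfun hd hξ hρ
  have : 0 < waveC pfun hd ξ U ^ 2 := by nlinarith [dirDot_sq_le hd hξ (magB U)]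
  exact lt_of_le_of_ne (Real.sqrt_nonneg _) (fun h => by rw [← h] at this; simp at this)

lemma abs_fluxCoupling_le (hξ : unitVec ξ) {U : MHDState} (hU : U ∈ Gset)
    (vs Bs : Fin 3 → ℝ) :
    |fluxCoupling pfun hd ξ U vs Bs| ≤ waveC pfun hd ξ U * relEnergy U vs Bs := by
  obtain ⟨hρ, hI⟩ := hU
  obtain ⟨h₁, h₂, hl⟩ := waveC_spec pfun hd hξ hρ
  simp only [dirDot_eq_dot3_padDir] at h₁ h₂ hl
  have hQ : fluxCoupling pfun hd ξ U vs Bs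
      = dot3 (magB U - Bs) (dot3 (padDir ξ) (vel U - vs) • magB U
          - dot3 (padDir ξ) (magB U) • (vel U - vs))
        + pres pfun U * dot3 (padDir ξ) (vel U - vs) := by
    simp only [fluxCoupling, dirDot_eq_dot3_padDir, dot3, Fin.sum_univ_three, Pi.sub_apply,
      Pi.smul_apply, smul_eq_mul]
    ring
  have hy : (pres pfun U * dot3 (padDir ξ) (vel U - vs)) ^ 2
      ≤ 2 * intE U * (dens U * soundC pfun U ^ 2 * dot3 (padDir ξ) (vel U - vs) ^ 2) :=
    le_of_eq (by rw [mul_pow, sq_pres_eq pfun ⟨hρ, hI⟩]; ring)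
  set n := padDir ξ
  set w := vel U - vs
  set b := magB U - Bs
  set a := dens U * soundC pfun U ^ 2
  set z := dot3 n w • magB U - dot3 n (magB U) • w
  have hz : sq3 z + a * dot3 n w ^ 2 ≤ dens U * waveC pfun hd ξ U ^ 2 * sq3 w :=
    sq3_cross_add_le (sq3_padDir hd hξ) h₁ h₂ hl
  have hCS := sq_add_le_mul_add (sq3_nonneg b) (sq3_nonneg z) (by positivity) (by positivity)
    (dot3_sq_le b z) hy
  have hG : relEnergy U vs Bs = (sq3 b + 2 * intE U + dens U * sq3 w) / 2 := by
    simp only [relEnergy, b, w]; ring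
  have hsq : fluxCoupling pfun hd ξ U vs Bs ^ 2 ≤ (waveC pfun hd ξ U * relEnergy U vs Bs) ^ 2 := by
    have hX : 0 ≤ sq3 b + 2 * intE U := by have := sq3_nonneg b; positivity
    have hY : 0 ≤ dens U * sq3 w := mul_nonneg hρ.le (sq3_nonneg w)
    rw [hQ, hG]
    calc (dot3 b z + pres pfun U * dot3 n w) ^ 2
        ≤ (sq3 b + 2 * intE U) * (sq3 z + a * dot3 n w ^ 2) := hCS
      _ ≤ (sq3 b + 2 * intE U) * (dens U * waveC pfun hd ξ U ^ 2 * sq3 w) :=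
          mul_le_mul_of_nonneg_left hz hX
      _ ≤ _ := by nlinarith [sq_nonneg (sq3 b + 2 * intE U - dens U * sq3 w),
          sq_nonneg (waveC pfun hd ξ U)]
  exact abs_le_of_sq_le_sq hsq
    (mul_nonneg (Real.sqrt_nonneg _) (relEnergy_nonneg ⟨hρ, hI⟩ vs Bs))

end WaveSpeed

section WaveSpeedBounds

def jumpSpeed (U Ut : MHDState) : ℝ :=
  norm3 (magB U - magB Ut) / (Real.sqrt (dens U) + Real.sqrt (dens Ut))

lemma jumpSpeed_comm (U Ut : MHDState) : jumpSpeed U Ut = jumpSpeed Ut U := by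
  have h : sq3 (magB U - magB Ut) = sq3 (magB Ut - magB U) := by
    simp only [sq3, dot3, Fin.sum_univ_three, Pi.sub_apply]; ring
  rw [jumpSpeed, jumpSpeed, norm3, norm3, h, add_comm]

lemma jumpSpeed_nonneg (U Ut : MHDState) : 0 ≤ jumpSpeed U Ut :=
  div_nonneg (norm3_nonneg _) (by positivity)

lemma roeV_comm (U Ut : MHDState) : roeV U Ut = roeV Ut U := by
  funext k; simp only [roeV]; ring

variable {pfun : ℝ → ℝ → ℝ} {d : ℕ} {hd : d ≤ 3} {ξ : Fin d → ℝ} {Um Up : MHDState} {σ : ℝ}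

lemma le_sub_of_alphaR_le (h : alphaR pfun hd ξ Up Um ≤ σ) :
    max 0 (dirDot hd ξ (roeV Up Um) - dirDot hd ξ (vel Up)) + waveC pfun hd ξ Up
      + jumpSpeed Up Um ≤ σ - dirDot hd ξ (vel Up) := by
  rw [← sub_self (dirDot hd ξ (vel Up)), max_sub_sub_right]
  rw [alphaR] at h
  unfold jumpSpeed
  linarith

lemma le_sub_of_le_alphaL (h : σ ≤ alphaL pfun hd ξ Um Up) :
    max 0 (dirDot hd ξ (vel Um) - dirDot hd ξ (roeV Up Um)) + waveC pfun hd ξ Um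
      + jumpSpeed Up Um ≤ dirDot hd ξ (vel Um) - σ := by
  rw [← sub_self (dirDot hd ξ (vel Um)), max_sub_sub_left, roeV_comm, jumpSpeed_comm]
  rw [alphaL] at h
  unfold jumpSpeed
  linarith

end WaveSpeedBounds

section MagneticTerm

lemma sqrt_dens_add_mul_norm3_roeV_sub_le {U Ut : MHDState} (hU : 0 < dens U)
    (vs : Fin 3 → ℝ) :
    (Real.sqrt (dens U) + Real.sqrt (dens Ut)) * norm3 (roeV U Ut - vs)
      ≤ Real.sqrt (dens U) * norm3 (vel U - vs) + Real.sqrt (dens Ut) * norm3 (vel Ut - vs) := by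
  have hs : 0 < Real.sqrt (dens U) + Real.sqrt (dens Ut) := by
    have := Real.sqrt_pos.mpr hU; positivity
  have h : (Real.sqrt (dens U) + Real.sqrt (dens Ut)) • (roeV U Ut - vs)
      = Real.sqrt (dens U) • (vel U - vs) + Real.sqrt (dens Ut) • (vel Ut - vs) := by
    funext k
    simp only [roeV, Pi.smul_apply, Pi.sub_apply, Pi.add_apply, smul_eq_mul]
    field_simp
    ring
  have := norm3_add_le (Real.sqrt (dens U) • (vel U - vs)) (Real.sqrt (dens Ut) • (vel Ut - vs))
  rwa [← h, norm3_smul, norm3_smul, norm3_smul, abs_of_pos hs,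
    abs_of_nonneg (Real.sqrt_nonneg _), abs_of_nonneg (Real.sqrt_nonneg _)] at this

variable {d : ℕ} (hd : d ≤ 3) {ξ : Fin d → ℝ} {Um Up : MHDState}

lemma abs_roe_transport_le (hξ : unitVec ξ) (hUm : Um ∈ Gset) (hUp : Up ∈ Gset)
    (vs Bs : Fin 3 → ℝ) :
    |dirDot hd ξ (roeV Up Um - vs)| * |sq3 (magB Up - Bs) - sq3 (magB Um - Bs)| / 2
      ≤ jumpSpeed Up Um * (relEnergy Up vs Bs + relEnergy Um vs Bs) := by
  have hp := relEnergy_ge hUp vs Bs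
  have hm := relEnergy_ge hUm vs Bs
  simp only [← norm3_sq] at hp hm
  rw [jumpSpeed, div_mul_eq_mul_div, le_div_iff₀ (by have := Real.sqrt_pos.mpr hUp.1; positivity)]
  set rp := Real.sqrt (dens Up)
  set rm := Real.sqrt (dens Um)
  set xp := rp * norm3 (vel Up - vs)
  set xm := rm * norm3 (vel Um - vs)
  set yp := norm3 (magB Up - Bs)
  set ym := norm3 (magB Um - Bs)
  have hr : 0 < rp + rm := by have := Real.sqrt_pos.mpr hUp.1; positivity
  have hx : 0 ≤ xp + xm := by
    have := norm3_nonneg (vel Up - vs); have := norm3_nonneg (vel Um - vs); positivity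
  have hv : (rp + rm) * |dirDot hd ξ (roeV Up Um - vs)| ≤ xp + xm :=
    (mul_le_mul_of_nonneg_left (abs_dirDot_le hd hξ _) hr.le).trans
      (sqrt_dens_add_mul_norm3_roeV_sub_le hUp.1 vs)
  have hB : |sq3 (magB Up - Bs) - sq3 (magB Um - Bs)| ≤ (yp + ym) * norm3 (magB Up - magB Um) := by
    simpa using abs_sq3_sub_sq3_le (magB Up - Bs) (magB Um - Bs)
  have hxy : (xp + xm) * (yp + ym) ≤ 2 * (relEnergy Up vs Bs + relEnergy Um vs Bs) := by
    have hxp : xp ^ 2 = dens Up * norm3 (vel Up - vs) ^ 2 := by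
      rw [mul_pow, Real.sq_sqrt hUp.1.le]
    have hxm : xm ^ 2 = dens Um * norm3 (vel Um - vs) ^ 2 := by
      rw [mul_pow, Real.sq_sqrt hUm.1.le]
    nlinarith [sq_nonneg (xp - yp), sq_nonneg (xp - ym), sq_nonneg (xm - yp), sq_nonneg (xm - ym)]
  calc |dirDot hd ξ (roeV Up Um - vs)| * |sq3 (magB Up - Bs) - sq3 (magB Um - Bs)| / 2 * (rp + rm)
      = (rp + rm) * |dirDot hd ξ (roeV Up Um - vs)|
          * |sq3 (magB Up - Bs) - sq3 (magB Um - Bs)| / 2 := by ring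
    _ ≤ (xp + xm) * ((yp + ym) * norm3 (magB Up - magB Um)) / 2 := by gcongr
    _ ≤ _ := by nlinarith [mul_le_mul_of_nonneg_right hxy (norm3_nonneg (magB Up - magB Um))]

lemma magnetic_transport_ge (hξ : unitVec ξ) (hUm : Um ∈ Gset) (hUp : Up ∈ Gset)
    (vs Bs : Fin 3 → ℝ) :
    -(max 0 (dirDot hd ξ (roeV Up Um) - dirDot hd ξ (vel Up)) * relEnergy Up vs Bs
        + max 0 (dirDot hd ξ (vel Um) - dirDot hd ξ (roeV Up Um)) * relEnergy Um vs Bs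
        + jumpSpeed Up Um * (relEnergy Up vs Bs + relEnergy Um vs Bs))
      ≤ sq3 (magB Up - Bs) / 2 * dirDot hd ξ (vel Up - vs)
        - sq3 (magB Um - Bs) / 2 * dirDot hd ξ (vel Um - vs) := by
  set v := dirDot hd ξ (roeV Up Um)
  set s := dirDot hd ξ (roeV Up Um - vs)
  set ep := sq3 (magB Up - Bs)
  set em := sq3 (magB Um - Bs)
  have hsplit : ep / 2 * dirDot hd ξ (vel Up - vs) - em / 2 * dirDot hd ξ (vel Um - vs)
      = s * (ep - em) / 2 + (dirDot hd ξ (vel Up) - v) * (ep / 2)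
        - (dirDot hd ξ (vel Um) - v) * (em / 2) := by
    simp only [s, v, dirDot_sub]; ring
  have hroe := abs_roe_transport_le hd hξ hUm hUp vs Bs
  rw [← abs_mul] at hroe
  have hep := sq3_magB_sub_le_relEnergy hUp vs Bs
  have hem := sq3_magB_sub_le_relEnergy hUm vs Bs
  have hp : -(max 0 (v - dirDot hd ξ (vel Up)) * relEnergy Up vs Bs)
      ≤ (dirDot hd ξ (vel Up) - v) * (ep / 2) := by
    nlinarith [le_max_left 0 (v - dirDot hd ξ (vel Up)), le_max_right 0 (v - dirDot hd ξ (vel Up)),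
      sq3_nonneg (magB Up - Bs)]
  have hm : (dirDot hd ξ (vel Um) - v) * (em / 2)
      ≤ max 0 (dirDot hd ξ (vel Um) - v) * relEnergy Um vs Bs := by
    nlinarith [le_max_left 0 (dirDot hd ξ (vel Um) - v), le_max_right 0 (dirDot hd ξ (vel Um) - v),
      sq3_nonneg (magB Um - Bs)]
  rw [hsplit]
  linarith [neg_abs_le (s * (ep - em)), hroe]

end MagneticTerm

section HLL

variable {pfun : ℝ → ℝ → ℝ} {d : ℕ} {hd : d ≤ 3} {ξ : Fin d → ℝ} {Um Up : MHDState}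
  {σm σp : ℝ}

lemma hllFlux_eq_left (hσ : σp - σm ≠ 0) :
    hllFlux pfun hd ξ Um Up σm σp
      = σm • hllMid pfun hd ξ Um Up σm σp + dirFlux pfun hd ξ Um - σm • Um := by
  funext i
  simp only [hllFlux, hllMid, Pi.add_apply, Pi.sub_apply, Pi.smul_apply, smul_eq_mul]
  field_simp
  ring

lemma hllFlux_eq_right (hσ : σp - σm ≠ 0) :
    hllFlux pfun hd ξ Um Up σm σp
      = σp • hllMid pfun hd ξ Um Up σm σp + dirFlux pfun hd ξ Up - σp • Up := by
  funext i
  simp only [hllFlux, hllMid, Pi.add_apply, Pi.sub_apply, Pi.smul_apply, smul_eq_mul]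
  field_simp
  ring

lemma dens_hllMid (hσ : σp - σm ≠ 0) :
    (σp - σm) * dens (hllMid pfun hd ξ Um Up σm σp)
      = dens Up * (σp - dirDot hd ξ (vel Up)) + dens Um * (dirDot hd ξ (vel Um) - σm) := by
  have hF : ∀ U, dirFlux pfun hd ξ U 0 = dens U * dirDot hd ξ (vel U) := fun U => by
    simp only [dirFlux, Finset.sum_apply, Pi.smul_apply, smul_eq_mul, flux, mk, dirDot,
      Finset.mul_sum, Matrix.cons_val_zero]
    exact Finset.sum_congr rfl fun i _ => by ring
  simp only [hllMid, dens, Pi.add_apply, Pi.sub_apply, Pi.smul_apply, smul_eq_mul] at hF ⊢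
  rw [hF, hF]
  field_simp
  ring

lemma dot8_hllMid_nstar_eq (hUm : dens Um ≠ 0) (hUp : dens Up ≠ 0) (hσ : σp - σm ≠ 0)
    (vs Bs : Fin 3 → ℝ) :
    (σp - σm) * (dot8 (hllMid pfun hd ξ Um Up σm σp) (nstar vs Bs) + sq3 Bs / 2
        + dot3 vs Bs * (σp - σm)⁻¹ * (dirDot hd ξ (magB Up) - dirDot hd ξ (magB Um)))
      = (σp - dirDot hd ξ (vel Up)) * relEnergy Up vs Bs
        + (dirDot hd ξ (vel Um) - σm) * relEnergy Um vs Bs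
        - fluxCoupling pfun hd ξ Up vs Bs + fluxCoupling pfun hd ξ Um vs Bs
        + sq3 (magB Up - Bs) / 2 * dirDot hd ξ (vel Up - vs)
        - sq3 (magB Um - Bs) / 2 * dirDot hd ξ (vel Um - vs) := by
  have hH : dot8 (hllMid pfun hd ξ Um Up σm σp) (nstar vs Bs)
      = (σp - σm)⁻¹ * (σp * dot8 Up (nstar vs Bs) - dot8 (dirFlux pfun hd ξ Up) (nstar vs Bs)
        - σm * dot8 Um (nstar vs Bs) + dot8 (dirFlux pfun hd ξ Um) (nstar vs Bs)) := by
    simp only [dot8, ← dotProduct.eq_1, hllMid, smul_dotProduct, add_dotProduct,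
      sub_dotProduct, smul_eq_mul]
  rw [hH, dot8_dirFlux_nstar pfun hd ξ Up hUp, dot8_dirFlux_nstar pfun hd ξ Um hUm,
    dirDot_sub hd ξ (vel Up), dirDot_sub hd ξ (vel Um), ← dot8_nstar_add_eq_relEnergy Up hUp,
    ← dot8_nstar_add_eq_relEnergy Um hUm]
  field_simp
  ring

lemma dot8_hllMid_nstar_nonneg (hξ : unitVec ξ) (hUm : Um ∈ Gset) (hUp : Up ∈ Gset)
    (hσ : σm < σp)
    (hσp : max 0 (dirDot hd ξ (roeV Up Um) - dirDot hd ξ (vel Up)) + waveC pfun hd ξ Up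
      + jumpSpeed Up Um ≤ σp - dirDot hd ξ (vel Up))
    (hσm : max 0 (dirDot hd ξ (vel Um) - dirDot hd ξ (roeV Up Um)) + waveC pfun hd ξ Um
      + jumpSpeed Up Um ≤ dirDot hd ξ (vel Um) - σm)
    (vs Bs : Fin 3 → ℝ) :
    0 ≤ dot8 (hllMid pfun hd ξ Um Up σm σp) (nstar vs Bs) + sq3 Bs / 2
      + dot3 vs Bs * (σp - σm)⁻¹ * (dirDot hd ξ (magB Up) - dirDot hd ξ (magB Um)) := by
  have hσ' : 0 < σp - σm := sub_pos.mpr hσ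
  refine nonneg_of_mul_nonneg_right ?_ hσ'
  rw [dot8_hllMid_nstar_eq hUm.1.ne' hUp.1.ne' hσ'.ne']
  have hQp := abs_fluxCoupling_le pfun hd hξ hUp vs Bs
  have hQm := abs_fluxCoupling_le pfun hd hξ hUm vs Bs
  linarith [mul_le_mul_of_nonneg_right hσp (relEnergy_nonneg hUp vs Bs),
    mul_le_mul_of_nonneg_right hσm (relEnergy_nonneg hUm vs Bs),
    magnetic_transport_ge hd hξ hUm hUp vs Bs,
    le_abs_self (fluxCoupling pfun hd ξ Up vs Bs), neg_abs_le (fluxCoupling pfun hd ξ Um vs Bs)]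

end HLL

lemma mem_closure_GstarSet {U : MHDState} (hρ : 0 < dens U)
    (h : ∀ vs Bs : Fin 3 → ℝ, 0 ≤ dot8 U (nstar vs Bs) + sq3 Bs / 2) : U ∈ closure GstarSet := by
  have hmem : ∀ ε : ℝ, 0 < ε → U + ε • Pi.single 7 1 ∈ GstarSet := fun ε hε =>
    ⟨by simpa [dens] using hρ, fun vs Bs => by
      have : dot8 (U + ε • Pi.single 7 1) (nstar vs Bs) = dot8 U (nstar vs Bs) + ε := by
        simp only [dot8, ← dotProduct.eq_1, add_dotProduct, smul_dotProduct, single_dotProduct,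
          smul_eq_mul, show nstar vs Bs 7 = 1 from rfl, mul_one]
      linarith [h vs Bs]⟩
  have hlim : Filter.Tendsto (fun ε : ℝ => U + ε • (Pi.single 7 1 : MHDState))
      (nhdsWithin 0 (Set.Ioi 0)) (nhds U) := by
    have : Continuous fun ε : ℝ => U + ε • (Pi.single 7 1 : MHDState) := by fun_prop
    simpa using (this.tendsto 0).mono_left nhdsWithin_le_nhds
  exact mem_closure_of_tendsto hlim (eventually_nhdsWithin_of_forall hmem)

theorem hll_flux_properties_general (pfun : ℝ → ℝ → ℝ) (hEOS : IsEOS pfun)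
    {d : ℕ} (hd : d ≤ 3) (ξ : Fin d → ℝ) (hξ : unitVec ξ)
    (Um Up : MHDState) (hUm : Um ∈ Gset) (hUp : Up ∈ Gset)
    (σl σr : ℝ)
    (hr : alphaR pfun hd ξ Up Um ≤ σr) (hl : σl ≤ alphaL pfun hd ξ Um Up) :
    0 < max σr 0 - min σl 0 ∧
      hllFlux pfun hd ξ Um Up (min σl 0) (max σr 0) =
          min σl 0 • hllMid pfun hd ξ Um Up (min σl 0) (max σr 0)
            + dirFlux pfun hd ξ Um - min σl 0 • Um ∧
      hllFlux pfun hd ξ Um Up (min σl 0) (max σr 0) =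
          max σr 0 • hllMid pfun hd ξ Um Up (min σl 0) (max σr 0)
            + dirFlux pfun hd ξ Up - max σr 0 • Up ∧
      hllMid pfun hd ξ Um Up (min σl 0) (max σr 0) ∈ Grho ∧
      (∀ vs Bs : Fin 3 → ℝ,
        0 ≤ dot8 (hllMid pfun hd ξ Um Up (min σl 0) (max σr 0)) (nstar vs Bs)
            + sq3 Bs / 2
            + dot3 vs Bs * (max σr 0 - min σl 0)⁻¹ *
                (dirDot hd ξ (magB Up) - dirDot hd ξ (magB Um))) ∧
      (dirDot hd ξ (magB Up) = dirDot hd ξ (magB Um) →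
        hllMid pfun hd ξ Um Up (min σl 0) (max σr 0) ∈ closure GstarSet) := by
  have hσp := le_sub_of_alphaR_le (hr.trans (le_max_left σr 0))
  have hσm := le_sub_of_le_alphaL ((min_le_left σl 0).trans hl)
  have hCp := waveC_pos pfun hd hEOS hξ hUp
  have hCm := waveC_pos pfun hd hEOS hξ hUm
  have hμ := jumpSpeed_nonneg Up Um
  have hp := le_max_left 0 (dirDot hd ξ (roeV Up Um) - dirDot hd ξ (vel Up))
  have hm := le_max_left 0 (dirDot hd ξ (vel Um) - dirDot hd ξ (roeV Up Um))
  have hΔ : 0 < max σr 0 - min σl 0 := by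
    linarith [le_max_right 0 (dirDot hd ξ (roeV Up Um) - dirDot hd ξ (vel Up)),
      le_max_right 0 (dirDot hd ξ (vel Um) - dirDot hd ξ (roeV Up Um))]
  have hdens : 0 < dens (hllMid pfun hd ξ Um Up (min σl 0) (max σr 0)) := by
    refine pos_of_mul_pos_right ?_ hΔ.le
    rw [dens_hllMid hΔ.ne']
    exact add_pos (mul_pos hUp.1 (by linarith)) (mul_pos hUm.1 (by linarith))
  have hiii := dot8_hllMid_nstar_nonneg hξ hUm hUp (sub_pos.mp hΔ) hσp hσm
  refine ⟨hΔ, hllFlux_eq_left hΔ.ne', hllFlux_eq_right hΔ.ne',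
    hdens, hiii, fun hB => mem_closure_GstarSet hdens fun vs Bs => ?_⟩
  simpa [hB] using hiii vs Bs

/-- Theorem 2.10 (properties of the HLL flux). -/
theorem hll_flux_properties (pfun : ℝ → ℝ → ℝ) (hEOS : IsEOS pfun)
    {d : ℕ} (hd1 : 1 ≤ d) (hd : d ≤ 3) (ξ : Fin d → ℝ) (hξ : unitVec ξ)
    (Um Up : MHDState) (hUm : Um ∈ Gset) (hUp : Up ∈ Gset)
    (σl σr : ℝ)
    (hr : alphaR pfun hd ξ Up Um ≤ σr) (hl : σl ≤ alphaL pfun hd ξ Um Up) :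
    0 < max σr 0 - min σl 0 ∧
      hllFlux pfun hd ξ Um Up (min σl 0) (max σr 0) =
          min σl 0 • hllMid pfun hd ξ Um Up (min σl 0) (max σr 0)
            + dirFlux pfun hd ξ Um - min σl 0 • Um ∧
      hllFlux pfun hd ξ Um Up (min σl 0) (max σr 0) =
          max σr 0 • hllMid pfun hd ξ Um Up (min σl 0) (max σr 0)
            + dirFlux pfun hd ξ Up - max σr 0 • Up ∧
      hllMid pfun hd ξ Um Up (min σl 0) (max σr 0) ∈ Grho ∧
      (∀ vs Bs : Fin 3 → ℝ,
        0 ≤ dot8 (hllMid pfun hd ξ Um Up (min σl 0) (max σr 0)) (nstar vs Bs)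
            + sq3 Bs / 2
            + dot3 vs Bs * (max σr 0 - min σl 0)⁻¹ *
                (dirDot hd ξ (magB Up) - dirDot hd ξ (magB Um))) ∧
      (dirDot hd ξ (magB Up) = dirDot hd ξ (magB Um) →
        hllMid pfun hd ξ Um Up (min σl 0) (max σr 0) ∈ closure GstarSet) :=
  hll_flux_properties_general pfun hEOS hd ξ hξ Um Up hUm hUp σl σr hr hl

end MHD
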